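/- Let U be a real random variable with distribution F satisfying E[U] = 0, E[U²] = 1, E[U³] = 0 and E[U⁴] < ∞, let τ > 0, and let λ ↦ p(y; λ) be four times continuously differentiable in λ with derivatives dominated near λ₀ by an F-integrable function so that differentiation under the integral sign is justified, and suppose p(y; λ₀) > 0. Define l(η) = log ∫ p(y; λ₀ + τ √η · u) dF(u) for η ≥ 0. Then the second right derivative of l at η = 0 exists, is finite, and equals ∇²_η l |_{η=0} = (τ⁴/12) [ E[U⁴] · ∇⁴_λ p(y; λ₀)/p(y; λ₀) − 3 (E[U²])² ( ∇²_λ p(y; λ₀)/p(y; λ₀) )² ]. -/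

import Mathlib

/-!
Put `g(ξ) = ∫ p(l₀ + τξu) dF(u)`. Differentiating under the integral sign,
`g⁽ᵏ⁾(0) = τᵏ p⁽ᵏ⁾(l₀) E[Uᵏ]`, so `g'(0) = g'''(0) = 0`, and Taylor's formula (l'Hôpital's rule
applied repeatedly) gives `(log g)'(ξ) = Bξ + Cξ³ + o(ξ³)` with `B = g''(0)/g(0)` and
`C = g⁗(0)/(6 g(0)) - B²/2`. For `l(η) = log g(√η)` and `η = ξ² > 0` we have
`l'(η) = (log g)'(ξ)/(2ξ) = B/2 + Cξ²/2 + o(ξ²)`, whence `l'(0) = B/2` and `l''(0) = C/2`.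
-/

open MeasureTheory Filter Topology

theorem HasDerivAt.tendsto_div_nhdsGT_zero {f : ℝ → ℝ} {f' : ℝ} (hf : HasDerivAt f f' 0)
    (hf0 : f 0 = 0) : Tendsto (fun x => f x / x) (𝓝[>] 0) (𝓝 f') := by
  simpa [hf0, div_eq_inv_mul] using hf.tendsto_slope_zero_right

theorem tendsto_div_pow_succ_nhdsGT_zero {f f' : ℝ → ℝ} {n : ℕ} {L : ℝ}
    (hf : ∀ᶠ x in 𝓝[>] 0, HasDerivAt f (f' x) x) (hf0 : Tendsto f (𝓝[>] 0) (𝓝 0))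
    (hf' : Tendsto (fun x => f' x / x ^ n) (𝓝[>] 0) (𝓝 L)) :
    Tendsto (fun x => f x / x ^ (n + 1)) (𝓝[>] 0) (𝓝 (L / (n + 1))) := by
  have hpow : Tendsto (fun x : ℝ => x ^ (n + 1)) (𝓝[>] 0) (𝓝 0) :=
    ((continuous_pow (n + 1)).tendsto' 0 0 (by simp)).mono_left nhdsWithin_le_nhds
  refine HasDerivAt.lhopital_zero_nhdsGT (g' := fun x => (n + 1) * x ^ n) hf
    (Eventually.of_forall fun x => by simpa using hasDerivAt_pow (n + 1) x)
    (eventually_mem_nhdsWithin.mono fun x (hx : 0 < x) => by positivity) hf0 hpow ?_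
  simpa only [div_div, mul_comm] using hf'.div_const (n + 1)

theorem tendsto_sqrt_nhdsGT_zero : Tendsto Real.sqrt (𝓝[>] 0) (𝓝[>] 0) :=
  tendsto_nhdsWithin_iff.mpr
    ⟨(Real.continuous_sqrt.tendsto' 0 0 Real.sqrt_zero).mono_left nhdsWithin_le_nhds,
      eventually_mem_nhdsWithin.mono fun _ hx => Real.sqrt_pos.mpr hx⟩

theorem hasDerivWithinAt_Ici_zero_of_tendsto_sq {f : ℝ → ℝ} {L : ℝ}
    (h : Tendsto (fun ξ => (f (ξ ^ 2) - f 0) / ξ ^ 2) (𝓝[>] 0) (𝓝 L)) :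
    HasDerivWithinAt f L (Set.Ici 0) 0 := by
  rw [hasDerivWithinAt_iff_tendsto_slope, Set.Ici_sdiff_left]
  refine (h.comp tendsto_sqrt_nhdsGT_zero).congr' ?_
  filter_upwards [eventually_mem_nhdsWithin] with η (hη : 0 < η)
  simp [slope_def_field, Real.sq_sqrt hη.le]

section CompSqrt

variable {h h' : ℝ → ℝ} {B C : ℝ} (hd : ∀ᶠ ξ in 𝓝[>] 0, HasDerivAt h (h' ξ) ξ)
  (hc : Tendsto h (𝓝[>] 0) (𝓝 (h 0)))
  (hexp : Tendsto (fun ξ => (h' ξ - B * ξ) / ξ ^ 3) (𝓝[>] 0) (𝓝 C))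
include hd hc hexp

theorem hasDerivWithinAt_comp_sqrt_zero :
    HasDerivWithinAt (fun η => h (Real.sqrt η)) (B / 2) (Set.Ici 0) 0 := by
  have hslope : Tendsto (fun ξ => h' ξ / ξ ^ 1) (𝓝[>] 0) (𝓝 B) := by
    have hsq : Tendsto (fun ξ : ℝ => ξ ^ 2) (𝓝[>] 0) (𝓝 0) :=
      ((continuous_pow 2).tendsto' 0 0 (by simp)).mono_left nhdsWithin_le_nhds
    have hlim := (hexp.mul hsq).add_const B
    rw [mul_zero, zero_add] at hlim
    refine hlim.congr' ?_
    filter_upwards [eventually_mem_nhdsWithin] with ξ (hξ : 0 < ξ)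
    field_simp
    ring
  have hquad := tendsto_div_pow_succ_nhdsGT_zero (hd.mono fun ξ hξ => hξ.sub_const (h 0))
    (by simpa using hc.sub_const (h 0)) hslope
  norm_num at hquad
  refine hasDerivWithinAt_Ici_zero_of_tendsto_sq (hquad.congr' ?_)
  filter_upwards [eventually_mem_nhdsWithin] with ξ (hξ : 0 < ξ)
  simp [Real.sqrt_sq hξ.le]

theorem hasDerivWithinAt_derivWithin_comp_sqrt_zero :
    HasDerivWithinAt (derivWithin (fun η => h (Real.sqrt η)) (Set.Ici 0)) (C / 2)
      (Set.Ici 0) 0 := by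
  have h0 : derivWithin (fun η => h (Real.sqrt η)) (Set.Ici 0) 0 = B / 2 :=
    (hasDerivWithinAt_comp_sqrt_zero hd hc hexp).derivWithin (uniqueDiffWithinAt_Ici 0)
  refine hasDerivWithinAt_Ici_zero_of_tendsto_sq ((hexp.div_const 2).congr' ?_)
  filter_upwards [eventually_mem_nhdsWithin, hd] with ξ (hξ : 0 < ξ) hdξ
  have hsqrt : HasDerivAt Real.sqrt (1 / (2 * ξ)) (ξ ^ 2) := by
    simpa [Real.sqrt_sq hξ.le] using Real.hasDerivAt_sqrt (pow_pos hξ 2).ne'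
  have hcomp : HasDerivAt (fun η => h (Real.sqrt η)) (h' ξ * (1 / (2 * ξ))) (ξ ^ 2) :=
    hdξ.comp_of_eq (ξ ^ 2) hsqrt (Real.sqrt_sq hξ.le).symm
  rw [h0, hcomp.hasDerivWithinAt.derivWithin (uniqueDiffOn_Ici 0 _ (sq_nonneg ξ))]
  field_simp

end CompSqrt

section DerivChain

variable {g : ℕ → ℝ → ℝ} (hg : ∀ k < 4, ∀ᶠ x in 𝓝 0, HasDerivAt (g k) (g (k + 1) x) x)
include hg

theorem tendsto_derivChain_nhdsGT_zero {k : ℕ} (hk : k < 4) :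
    Tendsto (g k) (𝓝[>] 0) (𝓝 (g k 0)) :=
  (hg k hk).self_of_nhds.continuousAt.tendsto.mono_left nhdsWithin_le_nhds

theorem eventually_hasDerivAt_derivChain_nhdsGT_zero {k : ℕ} (hk : k < 4) :
    ∀ᶠ x in 𝓝[>] 0, HasDerivAt (g k) (g (k + 1) x) x :=
  (hg k hk).filter_mono nhdsWithin_le_nhds

theorem tendsto_derivChain_sub_div_pow_succ {k n : ℕ} (hk : k < 4) {L : ℝ}
    (h : Tendsto (fun x => g (k + 1) x / x ^ n) (𝓝[>] 0) (𝓝 L)) :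
    Tendsto (fun x => (g k x - g k 0) / x ^ (n + 1)) (𝓝[>] 0) (𝓝 (L / (n + 1))) :=
  tendsto_div_pow_succ_nhdsGT_zero
    ((eventually_hasDerivAt_derivChain_nhdsGT_zero hg hk).mono fun _ hx => hx.sub_const _)
    (by simpa using (tendsto_derivChain_nhdsGT_zero hg hk).sub_const (g k 0)) h

theorem tendsto_derivChain_sub_div_sq (hg1 : g 1 0 = 0) :
    Tendsto (fun x => (g 0 x - g 0 0) / x ^ 2) (𝓝[>] 0) (𝓝 (g 2 0 / 2)) := by
  simpa [one_add_one_eq_two] using tendsto_derivChain_sub_div_pow_succ hg (k := 0) (n := 1)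
    (by norm_num) (by simpa using (hg 1 (by norm_num)).self_of_nhds.tendsto_div_nhdsGT_zero hg1)

theorem tendsto_derivChain_sub_mul_div_cube (hg1 : g 1 0 = 0) (hg3 : g 3 0 = 0) :
    Tendsto (fun x => (g 1 x - g 2 0 * x) / x ^ 3) (𝓝[>] 0) (𝓝 (g 4 0 / 6)) := by
  have hquad : Tendsto (fun x => (g 2 x - g 2 0) / x ^ 2) (𝓝[>] 0) (𝓝 (g 4 0 / 2)) := by
    simpa [one_add_one_eq_two] using tendsto_derivChain_sub_div_pow_succ hg (k := 2) (n := 1)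
      (by norm_num) (by simpa using (hg 3 (by norm_num)).self_of_nhds.tendsto_div_nhdsGT_zero hg3)
  have hlin : Tendsto (fun x : ℝ => g 2 0 * x) (𝓝[>] 0) (𝓝 0) := by
    simpa using ((continuous_const_mul (g 2 0)).tendsto 0).mono_left nhdsWithin_le_nhds
  have hcube := tendsto_div_pow_succ_nhdsGT_zero (f := fun x => g 1 x - g 2 0 * x)
    ((eventually_hasDerivAt_derivChain_nhdsGT_zero hg (by norm_num : 1 < 4)).mono
      fun x hx => hx.sub (by simpa using (hasDerivAt_id x).const_mul (g 2 0)))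
    (by simpa [hg1] using (tendsto_derivChain_nhdsGT_zero hg (by norm_num : 1 < 4)).sub hlin)
    hquad
  norm_num [div_div] at hcube
  exact hcube

theorem tendsto_logDeriv_derivChain_sub_mul_div_cube (hg1 : g 1 0 = 0) (hg3 : g 3 0 = 0)
    (ha : g 0 0 ≠ 0) :
    Tendsto (fun x => (g 1 x / g 0 x - g 2 0 / g 0 0 * x) / x ^ 3) (𝓝[>] 0)
      (𝓝 (g 4 0 / (6 * g 0 0) - g 2 0 ^ 2 / (2 * g 0 0 ^ 2))) := by
  have hg0 := tendsto_derivChain_nhdsGT_zero hg (by norm_num : 0 < 4)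
  have hlim := (((tendsto_derivChain_sub_mul_div_cube hg hg1 hg3).const_mul (g 0 0)).sub
    ((tendsto_derivChain_sub_div_sq hg hg1).const_mul (g 2 0))).div (hg0.const_mul (g 0 0))
    (mul_ne_zero ha ha)
  convert hlim.congr' ?_ using 2
  · field_simp
  filter_upwards [eventually_mem_nhdsWithin, hg0.eventually_ne ha] with x (hx : 0 < x) hx0
  rw [Pi.div_apply]
  field_simp
  ring

theorem hasDerivWithinAt_derivWithin_log_comp_sqrt (hg1 : g 1 0 = 0) (hg3 : g 3 0 = 0)
    (ha : g 0 0 ≠ 0) :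
    HasDerivWithinAt (derivWithin (fun η => Real.log (g 0 (Real.sqrt η))) (Set.Ici 0))
      (g 4 0 / (12 * g 0 0) - (g 2 0 / (2 * g 0 0)) ^ 2) (Set.Ici 0) 0 := by
  have hg0 := tendsto_derivChain_nhdsGT_zero hg (by norm_num : 0 < 4)
  convert hasDerivWithinAt_derivWithin_comp_sqrt_zero (h := fun x => Real.log (g 0 x))
    (h' := fun x => g 1 x / g 0 x) ?_ ((Real.continuousAt_log ha).tendsto.comp hg0)
    (tendsto_logDeriv_derivChain_sub_mul_div_cube hg hg1 hg3 ha) using 1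
  · field_simp
    ring
  filter_upwards [eventually_hasDerivAt_derivChain_nhdsGT_zero hg (by norm_num : 0 < 4),
    hg0.eventually_ne ha] with x hx hx0
  exact hx.log hx0

end DerivChain

/-- The `k`-th derivative of `ξ ↦ ∫ p(l₀ + τξu) dF(u)`, see `hasDerivAt_mixtureDeriv`. -/
noncomputable def mixtureDeriv (F : Measure ℝ) (τ l₀ : ℝ) (p : ℝ → ℝ) (k : ℕ) (ξ : ℝ) : ℝ :=
  ∫ u, (τ * u) ^ k * iteratedDeriv k p (l₀ + τ * ξ * u) ∂F

section Mixture

variable {F : Measure ℝ} {τ l₀ : ℝ} {p : ℝ → ℝ}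

theorem mixtureDeriv_zero (ξ : ℝ) :
    mixtureDeriv F τ l₀ p 0 ξ = ∫ u, p (l₀ + τ * ξ * u) ∂F := by
  simp [mixtureDeriv]

theorem mixtureDeriv_apply_zero (k : ℕ) :
    mixtureDeriv F τ l₀ p k 0 = τ ^ k * iteratedDeriv k p l₀ * ∫ u, u ^ k ∂F := by
  simp only [mixtureDeriv, mul_zero, zero_mul, add_zero]
  rw [← integral_const_mul]
  congr 1 with u
  ring

theorem hasDerivAt_mixtureIntegrand {n : ℕ} (hp : ContDiff ℝ n p) {k : ℕ} (hk : k < n)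
    (u x : ℝ) :
    HasDerivAt (fun x => (τ * u) ^ k * iteratedDeriv k p (l₀ + τ * x * u))
      ((τ * u) ^ (k + 1) * iteratedDeriv (k + 1) p (l₀ + τ * x * u)) x := by
  have hinner : HasDerivAt (fun x => l₀ + τ * x * u) (τ * u) x := by
    simpa [mul_comm, mul_left_comm] using ((hasDerivAt_id x).const_mul (τ * u)).const_add l₀
  have houter : HasDerivAt (iteratedDeriv k p) (iteratedDeriv (k + 1) p (l₀ + τ * x * u))
      (l₀ + τ * x * u) := by
    rw [iteratedDeriv_succ]
    exact (hp.differentiable_iteratedDeriv k (by exact_mod_cast hk) _).hasDerivAt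
  have := (houter.comp x hinner).const_mul ((τ * u) ^ k)
  exact this.congr_deriv (by ring)

theorem abs_mixtureIntegrand_le {k : ℕ} (hk : k ≤ 4) (u y : ℝ) :
    |(τ * u) ^ k * y| ≤ (1 + |τ|) ^ 4 * |u ^ k * y| := by
  rw [mul_pow, mul_assoc, abs_mul, abs_pow]
  gcongr
  calc |τ| ^ k ≤ (1 + |τ|) ^ k := by gcongr; linarith
    _ ≤ (1 + |τ|) ^ 4 := pow_le_pow_right₀ (by linarith [abs_nonneg τ]) hk

theorem hasDerivAt_mixtureDeriv (hp : ContDiff ℝ 4 p) {D : ℝ → ℝ} (hD : Integrable D F)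
    {ε : ℝ} (hdom : ∀ᵐ u ∂F, ∀ ξ : ℝ, |ξ| < ε → ∀ k ≤ 4,
      |u ^ k * iteratedDeriv k p (l₀ + τ * ξ * u)| ≤ D u)
    {k : ℕ} (hk : k < 4) {ξ₀ : ℝ} (hξ₀ : |ξ₀| < ε) :
    HasDerivAt (mixtureDeriv F τ l₀ p k) (mixtureDeriv F τ l₀ p (k + 1) ξ₀) ξ₀ := by
  have hmeas : ∀ j ≤ 4, ∀ x : ℝ,
      AEStronglyMeasurable (fun u => (τ * u) ^ j * iteratedDeriv j p (l₀ + τ * x * u)) F :=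
    fun j hj x => by
      have := hp.continuous_iteratedDeriv j (by exact_mod_cast hj)
      exact Continuous.aestronglyMeasurable (by fun_prop)
  have hball : ∀ x ∈ Metric.ball ξ₀ (ε - |ξ₀|), |x| < ε := fun x hx => by
    have := abs_sub_abs_le_abs_sub x ξ₀
    rw [Metric.mem_ball, Real.dist_eq] at hx
    linarith
  refine (hasDerivAt_integral_of_dominated_loc_of_deriv_le
    (F' := fun x u => (τ * u) ^ (k + 1) * iteratedDeriv (k + 1) p (l₀ + τ * x * u))
    (bound := fun u => (1 + |τ|) ^ 4 * D u)
    (Metric.ball_mem_nhds ξ₀ (sub_pos.mpr hξ₀)) (Eventually.of_forall (hmeas k hk.le))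
    ?_ (hmeas (k + 1) hk ξ₀) ?_ (hD.const_mul _) ?_).2
  · refine (hD.const_mul ((1 + |τ|) ^ 4)).mono' (hmeas k hk.le ξ₀) ?_
    filter_upwards [hdom] with u hu
    exact (abs_mixtureIntegrand_le hk.le u _).trans (by gcongr; exact hu ξ₀ hξ₀ k hk.le)
  · filter_upwards [hdom] with u hu x hx
    exact (abs_mixtureIntegrand_le hk u _).trans (by gcongr; exact hu x (hball x hx) (k + 1) hk)
  · exact Eventually.of_forall fun u x _ => hasDerivAt_mixtureIntegrand hp hk u x

end Mixture

theorem reparameterized_second_right_derivative_general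
    (F : Measure ℝ) [IsProbabilityMeasure F]
    (hU1 : ∫ u, u ∂F = 0) (hU2 : ∫ u, u ^ 2 ∂F = 1)
    (hU3 : ∫ u, u ^ 3 ∂F = 0)
    (τ : ℝ) (l₀ : ℝ)
    (p : ℝ → ℝ)
    (hsmooth : ContDiff ℝ 4 p)
    -- domination justifying differentiation under the integral sign
    (D : ℝ → ℝ) (hD : Integrable D F) (ε : ℝ) (hε : 0 < ε)
    (hdom : ∀ᵐ u ∂F, ∀ ξ : ℝ, |ξ| < ε → ∀ k ≤ 4,
      |u ^ k * iteratedDeriv k p (l₀ + τ * ξ * u)| ≤ D u)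
    (hpos : 0 < p l₀) :
    HasDerivWithinAt
      (fun η : ℝ => derivWithin
        (fun η' : ℝ => Real.log (∫ u, p (l₀ + τ * Real.sqrt η' * u) ∂F)) (Set.Ici 0) η)
      ((τ ^ 4 / 12) * ((∫ u, u ^ 4 ∂F) * (iteratedDeriv 4 p l₀ / p l₀)
        - 3 * (∫ u, u ^ 2 ∂F) ^ 2 * (iteratedDeriv 2 p l₀ / p l₀) ^ 2))
      (Set.Ici 0) 0 := by
  set g := mixtureDeriv F τ l₀ p
  have hg : ∀ k < 4, ∀ᶠ ξ in 𝓝 0, HasDerivAt (g k) (g (k + 1) ξ) ξ := fun k hk =>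
    eventually_of_mem (Metric.ball_mem_nhds 0 hε) fun ξ hξ =>
      hasDerivAt_mixtureDeriv hsmooth hD hdom hk (by simpa using hξ)
  have hg0 : g 0 0 = p l₀ := by simp [g, mixtureDeriv_apply_zero]
  have hg1 : g 1 0 = 0 := by simp [g, mixtureDeriv_apply_zero, hU1]
  have hg3 : g 3 0 = 0 := by simp [g, mixtureDeriv_apply_zero, hU3]
  have hl := hasDerivWithinAt_derivWithin_log_comp_sqrt hg hg1 hg3 (hg0 ▸ hpos.ne')
  rw [hg0] at hl
  simp only [g, mixtureDeriv_zero, mixtureDeriv_apply_zero] at hl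
  convert hl using 1
  rw [hU2]
  field_simp
  ring

/-- For the reparameterized mixture log-density
`l(η) = log ∫ p(y; l₀ + τ√η u) dF(u)`, `η ≥ 0`, with `E[U] = 0`, `E[U²] = 1`, `E[U³] = 0`
and `E[U⁴] < ∞`, the second right derivative of `l` at `η = 0` exists, is finite, and equals
`(τ⁴/12)[E[U⁴] ∇⁴_λ p/p − 3 (E[U²])² (∇²_λ p/p)²]` evaluated at `l₀`. -/
theorem reparameterized_second_right_derivative
    (F : Measure ℝ) [IsProbabilityMeasure F]
    (hU1 : ∫ u, u ∂F = 0) (hU2 : ∫ u, u ^ 2 ∂F = 1)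
    (hU3 : ∫ u, u ^ 3 ∂F = 0) (hU4 : Integrable (fun u => u ^ 4) F)
    (τ : ℝ) (hτ : 0 < τ) (l₀ : ℝ)
    (p : ℝ → ℝ)
    (hsmooth : ContDiff ℝ 4 p)
    -- domination justifying differentiation under the integral sign
    (D : ℝ → ℝ) (hD : Integrable D F) (ε : ℝ) (hε : 0 < ε)
    (hdom : ∀ᵐ u ∂F, ∀ ξ : ℝ, |ξ| < ε → ∀ k ≤ 4,
      |u ^ k * iteratedDeriv k p (l₀ + τ * ξ * u)| ≤ D u)
    (hpos : 0 < p l₀) :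
    HasDerivWithinAt
      (fun η : ℝ => derivWithin
        (fun η' : ℝ => Real.log (∫ u, p (l₀ + τ * Real.sqrt η' * u) ∂F)) (Set.Ici 0) η)
      ((τ ^ 4 / 12) * ((∫ u, u ^ 4 ∂F) * (iteratedDeriv 4 p l₀ / p l₀)
        - 3 * (∫ u, u ^ 2 ∂F) ^ 2 * (iteratedDeriv 2 p l₀ / p l₀) ^ 2))
      (Set.Ici 0) 0 :=
  reparameterized_second_right_derivative_general F hU1 hU2 hU3 τ l₀ p hsmooth D hD ε hε hdom hpos
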